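/- For k ∈ ℕ, μ ∈ ℂ (with μ + 1/2 not a nonpositive integer), and nonzero real x, the following finite inversion pair for Gegenbauer polynomials of reciprocal arguments holds: ((2k)! / (2^{2k} k!)) C_{2k}^{μ+1/2}(x) / (1-x²)^k = ∑_{r=0}^{k} [(-2k-μ)_{k-r} (μ+1/2)_{k-r} / (k-r)!] · ((2r)!/(2^{2r} r!)) C_{2r}^{μ+k-r+1/2}(1/x) / (1/x² - 1)^r, and the same identity with x and 1/x interchanged: ((2k)!/(2^{2k} k!)) C_{2k}^{μ+1/2}(1/x)/(1-1/x²)^k = ∑_{r=0}^{k} [(-2k-μ)_{k-r} (μ+1/2)_{k-r}/(k-r)!] · ((2r)!/(2^{2r} r!)) C_{2r}^{μ+k-r+1/2}(x)/(x²-1)^r. -/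
import Mathlib


noncomputable def poch (a : ℂ) (n : ℕ) : ℂ := (ascPochhammer ℂ n).eval a

/-- Gegenbauer polynomial `C_n^λ(y)` (explicit sum, complex order, real argument). -/
noncomputable def gegenbauerC (n : ℕ) (l : ℂ) (y : ℝ) : ℂ :=
  ∑ j ∈ Finset.range (n / 2 + 1),
    (-1) ^ j * Complex.Gamma ((n : ℂ) - j + l) /
      (Complex.Gamma l * (Nat.factorial j) * (Nat.factorial (n - 2 * j))) *
      (2 * (y : ℂ)) ^ (n - 2 * j)

open Finset

lemma poch_zero (a : ℂ) : poch a 0 = 1 := by simp [poch]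

lemma poch_succ (a : ℂ) (n : ℕ) : poch a (n+1) = poch a n * (a + n) := by
  simp [poch, ascPochhammer_succ_eval]

lemma poch_succ_left (a : ℂ) (n : ℕ) : poch a (n+1) = a * poch (a+1) n := by
  simp only [poch, ascPochhammer_succ_left, Polynomial.eval_mul, Polynomial.eval_X,
    Polynomial.eval_comp, Polynomial.eval_add, Polynomial.eval_one]

lemma poch_one (a : ℂ) : poch a 1 = a := by simp [poch_succ, poch_zero]

lemma poch_add (a : ℂ) (p q : ℕ) : poch a (p+q) = poch a p * poch (a+p) q := by
  induction q with
  | zero => simp [poch_zero]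
  | succ q ih =>
      rw [← Nat.add_assoc, poch_succ, ih, poch_succ]
      push_cast; ring

lemma poch_reflect (n : ℕ) : ∀ a : ℂ, poch a n = (-1)^n * poch (-a - n + 1) n := by
  induction n with
  | zero => simp [poch_zero]
  | succ n ih =>
      intro a
      rw [poch_succ_left, ih (a+1), poch_succ (-a - ((n+1:ℕ):ℂ) + 1) n]
      have h2 : (-(a+1) - (n:ℂ) + 1) = -a - ((n+1:ℕ):ℂ) + 1 := by push_cast; ring
      have h3 : (-a - ((n+1:ℕ):ℂ) + 1 + n) = -a := by push_cast; ring
      rw [h2, h3]; ring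

lemma VD (n : ℕ) : ∀ b c : ℂ,
    ∑ m ∈ range (n+1), (-1)^m * (n.choose m : ℂ) * poch b m * poch (c + m) (n - m)
      = poch (c - b) n := by
  induction n with
  | zero => intro b c; simp [poch_zero]
  | succ n ih =>
      intro b c
      rw [Finset.sum_range_succ']
      have hg0 : (-1)^0 * ((n+1).choose 0 : ℂ) * poch b 0 * poch (c + (0:ℕ)) (n + 1 - 0)
          = poch c (n+1) := by simp [poch_zero]
      rw [hg0]
      have hsplit : ∀ i ∈ range (n+1),
          (-1)^(i+1) * ((n+1).choose (i+1) : ℂ) * poch b (i+1) * poch (c + (i+1:ℕ)) (n + 1 - (i+1))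
          = (-b) * ((-1)^i * (n.choose i : ℂ) * poch (b+1) i * poch ((c+1) + i) (n - i))
            + ((-1)^(i+1) * (n.choose (i+1) : ℂ) * poch b (i+1) * poch (c + (i+1:ℕ)) (n + 1 - (i+1))) := by
        intro i _
        rw [Nat.choose_succ_succ]
        have h1 : poch b (i+1) = b * poch (b+1) i := poch_succ_left b i
        have h2 : (c + ((i+1:ℕ):ℂ)) = (c+1) + i := by push_cast; ring
        have h3 : n + 1 - (i+1) = n - i := by omega
        rw [h1, h2, h3]
        push_cast
        ring
      rw [Finset.sum_congr rfl hsplit, Finset.sum_add_distrib, ← Finset.mul_sum, ih (b+1) (c+1)]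
      have hc1 : (c + 1 - (b+1) : ℂ) = c - b := by ring
      rw [hc1]
      -- second piece: combine with poch c (n+1) term
      have hB : poch c (n+1) + ∑ i ∈ range (n+1),
          (-1)^(i+1) * (n.choose (i+1) : ℂ) * poch b (i+1) * poch (c + (i+1:ℕ)) (n + 1 - (i+1))
          = (c + n) * poch (c - b) n := by
        have : poch c (n+1) + ∑ i ∈ range (n+1),
            (-1)^(i+1) * (n.choose (i+1) : ℂ) * poch b (i+1) * poch (c + (i+1:ℕ)) (n + 1 - (i+1))
            = ∑ m ∈ range (n+2), (-1)^m * (n.choose m : ℂ) * poch b m * poch (c + m) (n + 1 - m) := by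
          rw [Finset.sum_range_succ' (fun m => (-1)^m * (n.choose m : ℂ) * poch b m * poch (c + m) (n + 1 - m)) (n+1)]
          simp [poch_zero]
          ring
        rw [this, Finset.sum_range_succ]
        have hlast : (-1)^(n+1) * (n.choose (n+1) : ℂ) * poch b (n+1) * poch (c + (n+1:ℕ)) (n + 1 - (n+1)) = 0 := by
          simp [Nat.choose_succ_self]
        rw [hlast, add_zero]
        have hterm : ∀ m ∈ range (n+1),
            (-1)^m * (n.choose m : ℂ) * poch b m * poch (c + m) (n + 1 - m)
            = (c + n) * ((-1)^m * (n.choose m : ℂ) * poch b m * poch (c + m) (n - m)) := by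
          intro m hm
          rw [Finset.mem_range] at hm
          have hm' : m ≤ n := by omega
          have h4 : n + 1 - m = (n - m) + 1 := by omega
          rw [h4, poch_succ]
          have h5 : (c + (m:ℂ) + ((n - m : ℕ) : ℂ)) = c + n := by
            rw [Nat.cast_sub hm']; ring
          rw [h5]; ring
        rw [Finset.sum_congr rfl hterm, ← Finset.mul_sum, ih b c]
      rw [add_right_comm, add_assoc, hB, poch_succ]
      ring

lemma PV (n : ℕ) : ∀ a b : ℂ,
    ∑ m ∈ range (n+1), (n.choose m : ℂ) * poch a m * poch b (n - m) = poch (a + b) n := by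
  induction n with
  | zero => intro a b; simp [poch_zero]
  | succ n ih =>
      intro a b
      rw [Finset.sum_range_succ']
      have hg0 : ((n+1).choose 0 : ℂ) * poch a 0 * poch b (n + 1 - 0) = b * poch (b+1) n := by
        simp [poch_zero, poch_succ_left]
      rw [hg0]
      have hsplit : ∀ i ∈ range (n+1),
          ((n+1).choose (i+1) : ℂ) * poch a (i+1) * poch b (n + 1 - (i+1))
          = a * ((n.choose i : ℂ) * poch (a+1) i * poch b (n - i))
            + b * ((n.choose (i+1) : ℂ) * poch a (i+1) * poch (b+1) (n - (i+1))) := by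
        intro i hi
        rw [Finset.mem_range] at hi
        rw [Nat.choose_succ_succ]
        have h1 : poch a (i+1) = a * poch (a+1) i := poch_succ_left a i
        have h3 : n + 1 - (i+1) = n - i := by omega
        rw [h3]
        by_cases hin : i < n
        · have h4 : n - i = (n - (i+1)) + 1 := by omega
          rw [h4, poch_succ_left b]
          push_cast; rw [h1]; ring
        · have hin' : i = n := by omega
          subst hin'
          simp [Nat.choose_succ_self, h1]
          ring
      rw [Finset.sum_congr rfl hsplit, Finset.sum_add_distrib, ← Finset.mul_sum, ← Finset.mul_sum,
        ih (a+1) b]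
      have hre : ∑ i ∈ range (n+1), (n.choose (i+1) : ℂ) * poch a (i+1) * poch (b+1) (n - (i+1))
      = ∑ m ∈ range (n+2), (n.choose m : ℂ) * poch a m * poch (b+1) (n - m) - poch (b+1) n := by
        rw [Finset.sum_range_succ' (fun m => (n.choose m : ℂ) * poch a m * poch (b+1) (n - m)) (n+1)]
        simp [poch_zero]
      rw [hre, Finset.sum_range_succ]
      have hlast : (n.choose (n+1) : ℂ) * poch a (n+1) * poch (b+1) (n - (n+1)) = 0 := by
        simp [Nat.choose_succ_self]
      rw [hlast, add_zero, ih a (b+1)]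
      have e1 : (a + 1 + b : ℂ) = a + b + 1 := by ring
      have e2 : (a + (b + 1) : ℂ) = a + b + 1 := by ring
      rw [e1, e2, poch_succ_left]
      ring

lemma fact2 (p : ℕ) : ((2*p).factorial : ℂ) = 4^p * (p.factorial) * poch (1/2) p := by
  induction p with
  | zero => simp [poch_zero]
  | succ p ih =>
      have h : 2 * (p+1) = (2*p + 1) + 1 := by ring
      rw [h, Nat.factorial_succ, Nat.factorial_succ, Nat.factorial_succ, poch_succ]
      push_cast [ih]
      ring

lemma not_nonpos_shift {ν : ℂ} (h : ∀ j : ℕ, ν ≠ -(j:ℂ)) (p : ℕ) :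
    ∀ j : ℕ, ν + p ≠ -(j:ℂ) := by
  intro j hj
  apply h (j + p)
  push_cast
  linear_combination hj

lemma Gamma_poch (ν : ℂ) (h : ∀ j : ℕ, ν ≠ -(j:ℂ)) (n : ℕ) :
    Complex.Gamma (ν + n) = Complex.Gamma ν * poch ν n := by
  induction n with
  | zero => simp [poch_zero]
  | succ n ih =>
      have h1 : (ν + ((n+1:ℕ):ℂ)) = (ν + n) + 1 := by push_cast; ring
      rw [h1, Complex.Gamma_add_one _ ?_, ih, poch_succ]
      · ring
      · intro h0
        exact h n (by linear_combination h0)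

noncomputable def Gs (n : ℕ) (ν : ℂ) (z : ℂ) : ℂ :=
  ∑ m ∈ range (n+1), (-1)^(n-m) * poch ν (n+m) * 4^m * z^m / ((n-m).factorial * (2*m).factorial)

noncomputable def Ss (n : ℕ) (b w : ℂ) : ℂ :=
  ∑ m ∈ range (n+1), (-1)^(n-m) * poch b m * poch (1/2 + m) (n-m) * w^m / ((n-m).factorial * m.factorial)

lemma gegen_eq (k : ℕ) (ν : ℂ) (hν : ∀ j : ℕ, ν ≠ -(j:ℂ)) (y : ℝ) :
    gegenbauerC (2*k) ν y = Gs k ν ((y:ℂ)^2) := by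
  have hΓ : Complex.Gamma ν ≠ 0 := Complex.Gamma_ne_zero hν
  unfold gegenbauerC Gs
  have h2k : 2*k/2 + 1 = k+1 := by omega
  rw [h2k,
    ← Finset.sum_range_reflect
      (fun m => (-1)^(k-m) * poch ν (k+m) * 4^m * (((y:ℝ):ℂ)^2)^m /
        ((k-m).factorial * (2*m).factorial)) (k+1)]
  apply Finset.sum_congr rfl
  intro j hj
  rw [Finset.mem_range] at hj
  have hjk : j ≤ k := by omega
  have e0 : k + 1 - 1 - j = k - j := by omega
  have e1 : k - (k - j) = j := by omega
  have e2 : k + (k - j) = 2*k - j := by omega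
  simp only [e0, e1, e2]
  have hcast : ((2*k : ℕ) : ℂ) - (j:ℂ) + ν = ν + ((2*k - j : ℕ) : ℂ) := by
    rw [Nat.cast_sub (by omega)]
    push_cast; ring
  rw [hcast, Gamma_poch ν hν]
  have hpow : (2 * ((y:ℝ):ℂ))^(2*k - 2*j) = 4^(k-j) * (((y:ℝ):ℂ)^2)^(k-j) := by
    have : 2*k - 2*j = 2*(k-j) := by omega
    rw [this, pow_mul, mul_pow]
    norm_num
    ring
  rw [hpow]
  have e3 : 2*k - 2*j = 2*(k-j) := by omega
  rw [e3]
  have hj' : (j.factorial : ℂ) ≠ 0 := Nat.cast_ne_zero.mpr (Nat.factorial_ne_zero j)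
  have hf2 : (((2*(k-j)).factorial : ℕ) : ℂ) ≠ 0 := Nat.cast_ne_zero.mpr (Nat.factorial_ne_zero _)
  field_simp

lemma sqkill (e : ℕ) : ((-1:ℂ))^e * (-1)^e = 1 := by
  rw [← pow_add, ← two_mul, pow_mul]; norm_num

lemma sub_pow_eq {p q : ℕ} (h : q ≤ p) : ((-1:ℂ))^(p-q) = (-1)^p * (-1)^q := by
  have h2 : ((-1:ℂ))^(2*q) = 1 := by rw [pow_mul]; norm_num
  calc ((-1:ℂ))^(p-q) = (-1)^(p-q) * (-1)^(2*q) := by rw [h2, mul_one]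
    _ = (-1)^((p-q) + 2*q) := (pow_add _ _ _).symm
    _ = (-1)^(p+q) := by congr 1; omega
    _ = (-1)^p * (-1)^q := pow_add _ _ _

lemma step1 {z : ℂ} (hz : z ≠ 1) {m n : ℕ} (h : m ≤ n) :
    (1-z)^n * (z/(z-1))^m = (-z)^m * (1-z)^(n-m) := by
  have h2 : z - 1 ≠ 0 := sub_ne_zero.mpr hz
  have e1 : ((-z):ℂ)^m = (-1)^m * z^m := by rw [neg_pow]
  have e2 : ((z:ℂ)-1)^m = (-1)^m * (1-z)^m := by
    rw [show z-1 = -(1-z) from by ring, neg_pow]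
  have e3 : ((1:ℂ)-z)^(n-m) * (1-z)^m = (1-z)^n := by
    rw [← pow_add]; congr 1; omega
  rw [div_pow, mul_div_assoc', div_eq_iff (pow_ne_zero m h2), e1, e2,
    show (-1:ℂ)^m * z^m * (1-z)^(n-m) * ((-1)^m*(1-z)^m)
      = ((-1)^m*(-1)^m) * (z^m * ((1-z)^(n-m) * (1-z)^m)) from by ring,
    sqkill, one_mul, e3]
  ring

lemma binom_expand (u : ℂ) (N : ℕ) :
    (1-u)^N = ∑ i ∈ range (N+1), (N.choose i : ℂ) * (-u)^i := by
  rw [show (1:ℂ)-u = -u+1 from by ring, add_pow]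
  apply Finset.sum_congr rfl
  intro i _
  rw [one_pow]; ring

lemma tri2 (n : ℕ) (f : ℕ → ℕ → ℂ) :
    ∑ m ∈ range (n+1), ∑ i ∈ range (n-m+1), f m i
      = ∑ j ∈ range (n+1), ∑ m ∈ range (j+1), f m (j-m) := by
  have h : ∀ m ∈ range (n+1), ∑ i ∈ range (n-m+1), f m i
      = ∑ j ∈ Finset.Ico m (n+1), f m (j-m) := by
    intro m hm; rw [Finset.mem_range] at hm
    rw [Finset.sum_Ico_eq_sum_range]
    have e : n+1-m = n-m+1 := by omega
    rw [e]
    apply Finset.sum_congr rfl; intro i _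
    congr 1; omega
  rw [Finset.sum_congr rfl h]
  simp only [Finset.range_eq_Ico]
  exact Finset.sum_Ico_Ico_comm 0 (n+1) (fun m j => f m (j-m))

lemma tri1 (k : ℕ) (f : ℕ → ℕ → ℂ) :
    ∑ m ∈ range (k+1), ∑ i ∈ range (m+1), f m i
      = ∑ i ∈ range (k+1), ∑ s ∈ range (k-i+1), f (i+s) i := by
  simp only [Finset.range_eq_Ico]
  rw [← Finset.sum_Ico_Ico_comm 0 (k+1) (fun i j => f j i)]
  apply Finset.sum_congr rfl
  intro i hi
  rw [Finset.mem_Ico] at hi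
  rw [Finset.sum_Ico_eq_sum_range]
  have e : k+1-i = k-i+1 := by omega
  rw [e, Finset.range_eq_Ico]

lemma poch_half_shift_ne (p : ℕ) : ((1:ℂ)/2 + (p:ℂ)) ≠ 0 := by
  have h : (1/2 + (p:ℝ)) ≠ 0 := by positivity
  have e : ((1:ℂ)/2 + (p:ℂ)) = ((1/2 + (p:ℝ) : ℝ) : ℂ) := by push_cast; ring
  rw [e]
  exact_mod_cast Complex.ofReal_ne_zero.mpr h

lemma poch_half_ne_zero (p : ℕ) : poch ((1:ℂ)/2) p ≠ 0 := by
  induction p with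
  | zero => simp [poch_zero]
  | succ p ih =>
      rw [poch_succ]
      exact mul_ne_zero ih (by simpa using poch_half_shift_ne p)

lemma lemAj (n j : ℕ) (hj : j ≤ n) (b' z : ℂ) :
    ∑ m ∈ range (j+1),
      (-1)^(n-m) * poch b' m * poch (1/2+(m:ℂ)) (n-m) /
          (((n-m).factorial : ℂ) * (m.factorial : ℂ)) * (-z)^m *
        (((n-m).choose (j-m) : ℕ) : ℂ) * (-z)^(j-m)
      = ((-1)^(n-j) * poch (1/2+(j:ℂ)) (n-j) * z^j /
          (((n-j).factorial : ℂ) * (j.factorial : ℂ))) * poch ((1:ℂ)/2 - b') j := by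
  rw [← VD j b' (1/2), Finset.mul_sum]
  apply Finset.sum_congr rfl
  intro m hm
  rw [Finset.mem_range] at hm
  have hmj : m ≤ j := by omega
  have hmn : m ≤ n := by omega
  have hre : (-1:ℂ)^(n-m) * poch b' m * poch (1/2+(m:ℂ)) (n-m) /
          (((n-m).factorial : ℂ) * (m.factorial : ℂ)) * (-z)^m *
        (((n-m).choose (j-m) : ℕ) : ℂ) * (-z)^(j-m)
      = (-1)^(n-m) * poch b' m * poch (1/2+(m:ℂ)) (n-m) /
          (((n-m).factorial : ℂ) * (m.factorial : ℂ)) *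
        (((n-m).choose (j-m) : ℕ) : ℂ) * ((-z)^m * (-z)^(j-m)) := by ring
  have hzfold : (-z)^m * (-z)^(j-m) = (-1)^j * z^j := by
    rw [← pow_add, show m+(j-m) = j from by omega, neg_pow]
  have hpoch : poch (1/2+(m:ℂ)) (n-m) = poch (1/2+(m:ℂ)) (j-m) * poch (1/2+(j:ℂ)) (n-j) := by
    have h := poch_add (1/2+(m:ℂ)) (j-m) (n-j)
    rw [show (j-m) + (n-j) = n-m from by omega] at h
    rw [h]
    congr 2
    push_cast [Nat.cast_sub hmj]
    ring
  have hfac : (((n-m).factorial : ℕ) : ℂ)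
      = (((n-m).choose (j-m) : ℕ) : ℂ) * ((j-m).factorial : ℂ) * ((n-j).factorial : ℂ) := by
    have hh := Nat.choose_mul_factorial_mul_factorial (show j-m ≤ n-m from by omega)
    rw [show n-m-(j-m) = n-j from by omega] at hh
    exact_mod_cast hh.symm
  have hfacj : ((j.factorial : ℕ) : ℂ)
      = ((j.choose m : ℕ) : ℂ) * (m.factorial : ℂ) * ((j-m).factorial : ℂ) := by
    have hh := Nat.choose_mul_factorial_mul_factorial hmj
    exact_mod_cast hh.symm
  rw [hre, hzfold, hpoch, hfac, sub_pow_eq hmn, sub_pow_eq hj, hfacj]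
  have n1 : (((n-m).choose (j-m) : ℕ) : ℂ) ≠ 0 :=
    Nat.cast_ne_zero.mpr (Nat.choose_pos (show j-m ≤ n-m from by omega)).ne'
  have n2 : ((j.choose m : ℕ) : ℂ) ≠ 0 :=
    Nat.cast_ne_zero.mpr (Nat.choose_pos hmj).ne'
  have n3 : (((j-m).factorial : ℕ) : ℂ) ≠ 0 := Nat.cast_ne_zero.mpr (Nat.factorial_ne_zero _)
  have n4 : (((n-j).factorial : ℕ) : ℂ) ≠ 0 := Nat.cast_ne_zero.mpr (Nat.factorial_ne_zero _)
  have n5 : ((m.factorial : ℕ) : ℂ) ≠ 0 := Nat.cast_ne_zero.mpr (Nat.factorial_ne_zero _)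
  field_simp

lemma lemA (n : ℕ) (ν z : ℂ) (hz : z ≠ 1) :
    ((2*n).factorial : ℂ) * Gs n ν z
      = 4^n * (n.factorial : ℂ) * poch ν n *
        ((1-z)^n * Ss n ((1:ℂ)/2 - n - ν) (z/(z-1))) := by
  have R1 : (1-z)^n * Ss n ((1:ℂ)/2 - n - ν) (z/(z-1))
      = ∑ m ∈ range (n+1), ∑ i ∈ range (n-m+1),
          (-1)^(n-m) * poch ((1:ℂ)/2 - n - ν) m * poch (1/2+(m:ℂ)) (n-m) /
              (((n-m).factorial : ℂ) * (m.factorial : ℂ)) * (-z)^m *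
            (((n-m).choose i : ℕ) : ℂ) * (-z)^i := by
    rw [Ss, Finset.mul_sum]
    apply Finset.sum_congr rfl
    intro m hm
    rw [Finset.mem_range] at hm
    have hmn : m ≤ n := by omega
    have st := step1 hz hmn
    have h1 : (1-z)^n * ((-1)^(n-m) * poch ((1:ℂ)/2 - n - ν) m * poch (1/2+(m:ℂ)) (n-m) *
            (z/(z-1))^m / (((n-m).factorial : ℂ) * (m.factorial : ℂ)))
        = ((-1)^(n-m) * poch ((1:ℂ)/2 - n - ν) m * poch (1/2+(m:ℂ)) (n-m) /
            (((n-m).factorial : ℂ) * (m.factorial : ℂ)) * (-z)^m) * (1-z)^(n-m) := by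
      linear_combination ((-1)^(n-m) * poch ((1:ℂ)/2 - n - ν) m * poch (1/2+(m:ℂ)) (n-m) /
        (((n-m).factorial : ℂ) * (m.factorial : ℂ))) * st
    rw [h1, binom_expand z (n-m), Finset.mul_sum]
    apply Finset.sum_congr rfl
    intro i _
    ring
  rw [R1, tri2 n (fun m i =>
      (-1)^(n-m) * poch ((1:ℂ)/2 - n - ν) m * poch (1/2+(m:ℂ)) (n-m) /
          (((n-m).factorial : ℂ) * (m.factorial : ℂ)) * (-z)^m *
        (((n-m).choose i : ℕ) : ℂ) * (-z)^i)]
  rw [Gs, Finset.mul_sum, Finset.mul_sum]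
  apply Finset.sum_congr rfl
  intro j hj
  rw [Finset.mem_range] at hj
  have hjn : j ≤ n := by omega
  rw [lemAj n j hjn ((1:ℂ)/2 - n - ν) z]
  have hb : ((1:ℂ)/2 - ((1:ℂ)/2 - n - ν)) = ν + (n:ℂ) := by ring
  rw [hb]
  -- scalar identity
  have hp1 : poch ν (n+j) = poch ν n * poch (ν + (n:ℂ)) j := poch_add ν n j
  have hp2 : poch ((1:ℂ)/2) n = poch ((1:ℂ)/2) j * poch ((1:ℂ)/2 + (j:ℂ)) (n-j) := by
    have h := poch_add ((1:ℂ)/2) j (n-j)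
    rw [show j + (n-j) = n from by omega] at h
    exact h
  rw [fact2 n, fact2 j, hp1, hp2, sub_pow_eq hjn]
  have n1 : (((n-j).factorial : ℕ) : ℂ) ≠ 0 := Nat.cast_ne_zero.mpr (Nat.factorial_ne_zero _)
  have n2 : ((j.factorial : ℕ) : ℂ) ≠ 0 := Nat.cast_ne_zero.mpr (Nat.factorial_ne_zero _)
  have n3 : poch ((1:ℂ)/2) j ≠ 0 := poch_half_ne_zero j
  have n4 : (4:ℂ)^j ≠ 0 := pow_ne_zero _ (by norm_num)
  have e12 : (1:ℂ)/2 + (j:ℂ) = 1/2 + (j:ℂ) := rfl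
  field_simp

lemma lemBL (k i : ℕ) (hik : i ≤ k) (B w : ℂ) :
    ∑ s ∈ range (k-i+1),
      (-1)^(k-(i+s)) * poch B (i+s) * poch (1/2+((i+s:ℕ):ℂ)) (k-(i+s)) /
          ((((k-(i+s)).factorial):ℂ) * (((i+s).factorial):ℂ)) *
        (((i+s).choose i : ℕ) : ℂ) * (-(1-w))^i
      = (-1)^i * poch B i * poch (B + 1/2 + (i:ℂ) - (k:ℂ)) (k-i) * (1-w)^i /
          ((((k-i).factorial):ℂ) * ((i.factorial):ℂ)) := by
  have hrefl : poch (B + 1/2 + (i:ℂ) - (k:ℂ)) (k-i) = (-1)^(k-i) * poch ((1:ℂ)/2 - B) (k-i) := by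
    rw [poch_reflect (k-i) (B + 1/2 + (i:ℂ) - (k:ℂ))]
    congr 2
    push_cast [Nat.cast_sub hik]
    ring
  have harg : poch ((1:ℂ)/2 - B) (k-i) = poch ((1/2+(i:ℂ)) - (B+(i:ℂ))) (k-i) := by
    congr 1; ring
  rw [hrefl, harg, ← VD (k-i) (B+(i:ℂ)) (1/2+(i:ℂ)), Finset.mul_sum, Finset.mul_sum,
    Finset.sum_mul, Finset.sum_div]
  apply Finset.sum_congr rfl
  intro s hs
  rw [Finset.mem_range] at hs
  have hsk : s ≤ k - i := by omega
  have hisk : i + s ≤ k := by omega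
  have h1 : (-1:ℂ)^(k-i-s) = (-1)^k * ((-1)^i * (-1)^s) := by
    rw [sub_pow_eq hsk, sub_pow_eq hik, mul_assoc]
  have h2 : poch B (i+s) = poch B i * poch (B+(i:ℂ)) s := poch_add B i s
  have h3 : poch (1/2+((i+s:ℕ):ℂ)) (k-(i+s)) = poch ((1/2+(i:ℂ))+(s:ℂ)) (k-i-s) := by
    rw [show k-(i+s) = k-i-s from by omega]
    congr 1
    push_cast; ring
  have h4 : (((i+s).factorial : ℕ) : ℂ)
      = (((i+s).choose i : ℕ) : ℂ) * ((i.factorial):ℂ) * ((s.factorial):ℂ) := by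
    have hh := Nat.choose_mul_factorial_mul_factorial (show i ≤ i+s from by omega)
    rw [show i+s-i = s from by omega] at hh
    exact_mod_cast hh.symm
  have h5 : (((k-i).factorial : ℕ) : ℂ)
      = (((k-i).choose s : ℕ) : ℂ) * ((s.factorial):ℂ) * (((k-i-s).factorial):ℂ) := by
    have hh := Nat.choose_mul_factorial_mul_factorial hsk
    rw [show k-i-s = k-i-s from rfl] at hh
    exact_mod_cast hh.symm
  have h6 : ((-(1-w)):ℂ)^i = (-1)^i * (1-w)^i := by rw [neg_pow]
  have h7 : (-1:ℂ)^(k-i) = (-1)^k * (-1)^i := sub_pow_eq hik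
  rw [show (-1:ℂ)^(k-(i+s)) = (-1)^(k-i-s) from by rw [show k-(i+s) = k-i-s from by omega],
    show (((k-(i+s)).factorial:ℕ):ℂ) = (((k-i-s).factorial:ℕ):ℂ) from by rw [show k-(i+s) = k-i-s from by omega]]
  rw [h1, h2, h3, h4, h6, h7, h5]
  have n1 : (((i+s).choose i : ℕ) : ℂ) ≠ 0 :=
    Nat.cast_ne_zero.mpr (Nat.choose_pos (show i ≤ i+s from by omega)).ne'
  have n2 : (((k-i).choose s : ℕ) : ℂ) ≠ 0 :=
    Nat.cast_ne_zero.mpr (Nat.choose_pos hsk).ne'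
  have n3 : ((i.factorial : ℕ) : ℂ) ≠ 0 := Nat.cast_ne_zero.mpr (Nat.factorial_ne_zero _)
  have n4 : ((s.factorial : ℕ) : ℂ) ≠ 0 := Nat.cast_ne_zero.mpr (Nat.factorial_ne_zero _)
  have n5 : (((k-i-s).factorial : ℕ) : ℂ) ≠ 0 := Nat.cast_ne_zero.mpr (Nat.factorial_ne_zero _)
  field_simp

lemma lemBR (k m : ℕ) (hmk : m ≤ k) (B w : ℂ) :
    ∑ s ∈ range (k-m+1),
      poch (B-(k:ℂ)) (k-(m+s)) / (((k-(m+s)).factorial):ℂ) *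
        ((-1)^m * poch B m * poch (1/2+(m:ℂ)) ((m+s)-m) * (1-w)^m /
          (((((m+s)-m).factorial):ℂ) * ((m.factorial):ℂ)))
      = (-1)^m * poch B m * poch (B + 1/2 + (m:ℂ) - (k:ℂ)) (k-m) * (1-w)^m /
          ((((k-m).factorial):ℂ) * ((m.factorial):ℂ)) := by
  have harg : poch (B + 1/2 + (m:ℂ) - (k:ℂ)) (k-m) = poch ((1/2+(m:ℂ)) + (B-(k:ℂ))) (k-m) := by
    congr 1; ring
  rw [harg, ← PV (k-m) (1/2+(m:ℂ)) (B-(k:ℂ)), Finset.mul_sum, Finset.sum_mul, Finset.sum_div]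
  apply Finset.sum_congr rfl
  intro s hs
  rw [Finset.mem_range] at hs
  have hsk : s ≤ k - m := by omega
  have h1 : (m+s)-m = s := by omega
  have h2 : k-(m+s) = k-m-s := by omega
  rw [h1, h2]
  have h5 : (((k-m).factorial : ℕ) : ℂ)
      = (((k-m).choose s : ℕ) : ℂ) * ((s.factorial):ℂ) * (((k-m-s).factorial):ℂ) := by
    have hh := Nat.choose_mul_factorial_mul_factorial hsk
    exact_mod_cast hh.symm
  rw [h5]
  have n2 : (((k-m).choose s : ℕ) : ℂ) ≠ 0 :=
    Nat.cast_ne_zero.mpr (Nat.choose_pos hsk).ne'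
  have n3 : ((m.factorial : ℕ) : ℂ) ≠ 0 := Nat.cast_ne_zero.mpr (Nat.factorial_ne_zero _)
  have n4 : ((s.factorial : ℕ) : ℂ) ≠ 0 := Nat.cast_ne_zero.mpr (Nat.factorial_ne_zero _)
  have n5 : (((k-m-s).factorial : ℕ) : ℂ) ≠ 0 := Nat.cast_ne_zero.mpr (Nat.factorial_ne_zero _)
  field_simp

lemma lemB (k : ℕ) (B w : ℂ) :
    Ss k B w = ∑ r ∈ range (k+1),
      (-1)^r * poch (B - (k:ℂ)) (k-r) / (((k-r).factorial):ℂ) * Ss r B (1-w) := by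
  have hL : Ss k B w = ∑ i ∈ range (k+1),
      (-1)^i * poch B i * poch (B + 1/2 + (i:ℂ) - (k:ℂ)) (k-i) * (1-w)^i /
        ((((k-i).factorial):ℂ) * ((i.factorial):ℂ)) := by
    rw [Ss]
    have hstep : ∀ m ∈ range (k+1),
        (-1)^(k-m) * poch B m * poch (1/2+(m:ℂ)) (k-m) * w^m /
            ((((k-m).factorial):ℂ) * ((m.factorial):ℂ))
        = ∑ i ∈ range (m+1),
            (-1)^(k-m) * poch B m * poch (1/2+((m:ℕ):ℂ)) (k-m) /
                ((((k-m).factorial):ℂ) * (((m).factorial):ℂ)) *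
              ((m.choose i : ℕ) : ℂ) * (-(1-w))^i := by
      intro m _
      have hw : w^m = ∑ i ∈ range (m+1), ((m.choose i : ℕ):ℂ) * (-(1-w))^i := by
        have h := binom_expand (1-w) m
        rw [show (1:ℂ)-(1-w) = w from by ring] at h
        exact h
      rw [hw, Finset.mul_sum, Finset.sum_div]
      apply Finset.sum_congr rfl
      intro i _
      ring
    rw [Finset.sum_congr rfl hstep, tri1 k (fun m i =>
        (-1)^(k-m) * poch B m * poch (1/2+((m:ℕ):ℂ)) (k-m) /
            ((((k-m).factorial):ℂ) * (((m).factorial):ℂ)) *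
          ((m.choose i : ℕ) : ℂ) * (-(1-w))^i)]
    apply Finset.sum_congr rfl
    intro i hi
    rw [Finset.mem_range] at hi
    exact lemBL k i (by omega) B w
  have hR : ∑ r ∈ range (k+1),
        (-1)^r * poch (B - (k:ℂ)) (k-r) / (((k-r).factorial):ℂ) * Ss r B (1-w)
      = ∑ i ∈ range (k+1),
        (-1)^i * poch B i * poch (B + 1/2 + (i:ℂ) - (k:ℂ)) (k-i) * (1-w)^i /
          ((((k-i).factorial):ℂ) * ((i.factorial):ℂ)) := by
    have hstep : ∀ r ∈ range (k+1),
        (-1)^r * poch (B - (k:ℂ)) (k-r) / (((k-r).factorial):ℂ) * Ss r B (1-w)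
        = ∑ m ∈ range (r+1),
            poch (B-(k:ℂ)) (k-r) / (((k-r).factorial):ℂ) *
              ((-1)^m * poch B m * poch (1/2+(m:ℂ)) (r-m) * (1-w)^m /
                ((((r-m).factorial):ℂ) * ((m.factorial):ℂ))) := by
      intro r _
      rw [Ss, Finset.mul_sum]
      apply Finset.sum_congr rfl
      intro m hm
      rw [Finset.mem_range] at hm
      rw [sub_pow_eq (show m ≤ r from by omega)]
      linear_combination (poch (B-(k:ℂ)) (k-r) / (((k-r).factorial):ℂ) *
        (poch B m * poch (1/2+(m:ℂ)) (r-m) * (1-w)^m /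
          ((((r-m).factorial):ℂ) * ((m.factorial):ℂ))) * (-1)^m) * sqkill r
    rw [Finset.sum_congr rfl hstep, tri1 k (fun r m =>
        poch (B-(k:ℂ)) (k-r) / (((k-r).factorial):ℂ) *
          ((-1)^m * poch B m * poch (1/2+(m:ℂ)) (r-m) * (1-w)^m /
            ((((r-m).factorial):ℂ) * ((m.factorial):ℂ))))]
    apply Finset.sum_congr rfl
    intro m hm
    rw [Finset.mem_range] at hm
    exact lemBR k m (by omega) B w
  rw [hL, hR]

lemma main (k : ℕ) (μ : ℂ)
    (hμ : ∀ j : ℕ, μ + 1 / 2 ≠ -(j : ℂ)) (x : ℝ) (hx0 : x ≠ 0) (hx1 : x ≠ 1) (hx2 : x ≠ -1) :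
    ((Nat.factorial (2 * k) : ℂ) / (2 ^ (2 * k) * (Nat.factorial k))) *
        gegenbauerC (2 * k) (μ + 1 / 2) x / ((1 - x ^ 2 : ℝ) : ℂ) ^ k =
      ∑ r ∈ Finset.range (k + 1),
        poch (-2 * (k : ℂ) - μ) (k - r) * poch (μ + 1 / 2) (k - r) /
            (Nat.factorial (k - r)) *
          (((Nat.factorial (2 * r) : ℂ)) / (2 ^ (2 * r) * (Nat.factorial r))) *
          gegenbauerC (2 * r) (μ + (k : ℂ) - r + 1 / 2) (1 / x) /
          ((1 / x ^ 2 - 1 : ℝ) : ℂ) ^ r := by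
  have hX : (x:ℂ) ≠ 0 := by exact_mod_cast hx0
  have hT0 : (x:ℂ)^2 ≠ 0 := pow_ne_zero _ hX
  have hx21 : x^2 ≠ 1 := by
    intro h
    have h2 : (x-1)*(x+1) = 0 := by nlinarith
    rcases mul_eq_zero.mp h2 with h3 | h3
    · exact hx1 (by linarith)
    · exact hx2 (by linarith)
  have hT1 : (x:ℂ)^2 ≠ 1 := by
    intro h
    exact hx21 (by exact_mod_cast h)
  have h1T : (1:ℂ) - (x:ℂ)^2 ≠ 0 := by
    intro h
    exact hT1 (by linear_combination -h)
  have hiT1 : 1/(x:ℂ)^2 ≠ 1 := by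
    intro h
    rw [div_eq_one_iff_eq hT0] at h
    exact hT1 h.symm
  have hiTm1 : 1/(x:ℂ)^2 - 1 ≠ 0 := sub_ne_zero.mpr hiT1
  have hkf : ((k.factorial : ℕ):ℂ) ≠ 0 := Nat.cast_ne_zero.mpr (Nat.factorial_ne_zero _)
  have h4k : (4:ℂ)^k ≠ 0 := pow_ne_zero _ (by norm_num)
  -- LHS
  have hA := lemA k (μ+1/2) ((x:ℂ)^2) hT1
  rw [show (1:ℂ)/2 - (k:ℂ) - (μ+1/2) = -(k:ℂ)-μ from by ring] at hA
  have hQL : ((2*k).factorial : ℂ) / (4^k * (k.factorial:ℂ)) * Gs k (μ+1/2) ((x:ℂ)^2) /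
        (1-(x:ℂ)^2)^k
      = poch (μ+1/2) k * Ss k (-(k:ℂ)-μ) ((x:ℂ)^2/((x:ℂ)^2-1)) := by
    rw [div_eq_iff (pow_ne_zero k h1T), div_mul_eq_mul_div,
      div_eq_iff (mul_ne_zero h4k hkf)]
    linear_combination hA
  rw [gegen_eq k (μ+1/2) hμ x,
    show ((1 - x^2 : ℝ):ℂ) = 1 - (x:ℂ)^2 from by push_cast; ring,
    show ((2:ℂ))^(2*k) = 4^k from by rw [pow_mul]; norm_num,
    hQL, lemB k (-(k:ℂ)-μ) ((x:ℂ)^2/((x:ℂ)^2-1)), Finset.mul_sum]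
  apply Finset.sum_congr rfl
  intro r hr
  rw [Finset.mem_range] at hr
  have hrk : r ≤ k := by omega
  have hνok : ∀ j:ℕ, (μ+1/2) + ((k-r:ℕ):ℂ) ≠ -(j:ℂ) := not_nonpos_shift hμ _
  have hν : μ+(k:ℂ)-r+1/2 = (μ+1/2) + ((k-r:ℕ):ℂ) := by
    push_cast [Nat.cast_sub hrk]; ring
  rw [hν, gegen_eq r ((μ+1/2) + ((k-r:ℕ):ℂ)) hνok (1/x),
    show (((1/x : ℝ)):ℂ)^2 = 1/(x:ℂ)^2 from by push_cast; ring,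
    show ((1/x^2 - 1 : ℝ):ℂ) = 1/(x:ℂ)^2 - 1 from by push_cast; ring,
    show ((2:ℂ))^(2*r) = 4^r from by rw [pow_mul]; norm_num]
  have hA2 := lemA r ((μ+1/2) + ((k-r:ℕ):ℂ)) (1/(x:ℂ)^2) hiT1
  rw [show (1:ℂ)/2 - (r:ℂ) - ((μ+1/2) + ((k-r:ℕ):ℂ)) = -(k:ℂ)-μ from by
      push_cast [Nat.cast_sub hrk]; ring,
    show (1/(x:ℂ)^2)/((1/(x:ℂ)^2)-1) = 1 - ((x:ℂ)^2/((x:ℂ)^2-1)) from by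
      rw [eq_sub_iff_add_eq, div_add_div _ _ hiTm1 (sub_ne_zero.mpr hT1),
        div_eq_one_iff_eq (mul_ne_zero hiTm1 (sub_ne_zero.mpr hT1))]
      field_simp
      ring
    ] at hA2
  rw [show (1:ℂ) - 1/(x:ℂ)^2 = -(1/(x:ℂ)^2 - 1) from by ring, neg_pow] at hA2
  have hrf : ((r.factorial : ℕ):ℂ) ≠ 0 := Nat.cast_ne_zero.mpr (Nat.factorial_ne_zero _)
  have h4r : (4:ℂ)^r ≠ 0 := pow_ne_zero _ (by norm_num)
  have hQ : ((2*r).factorial : ℂ) / (4^r * (r.factorial:ℂ)) * Gs r ((μ+1/2) + ((k-r:ℕ):ℂ)) (1/(x:ℂ)^2) /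
        (1/(x:ℂ)^2-1)^r
      = poch ((μ+1/2) + ((k-r:ℕ):ℂ)) r * ((-1)^r * Ss r (-(k:ℂ)-μ) (1 - ((x:ℂ)^2/((x:ℂ)^2-1)))) := by
    rw [div_eq_iff (pow_ne_zero r hiTm1), div_mul_eq_mul_div,
      div_eq_iff (mul_ne_zero h4r hrf)]
    linear_combination hA2
  rw [show poch (-2*(k:ℂ) - μ) (k-r) * poch (μ+1/2) (k-r) / (((k-r).factorial):ℂ) *
        (((2*r).factorial : ℂ) / (4^r * (r.factorial:ℂ))) *
        Gs r ((μ+1/2) + ((k-r:ℕ):ℂ)) (1/(x:ℂ)^2) / (1/(x:ℂ)^2-1)^r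
      = (poch (-2*(k:ℂ) - μ) (k-r) * poch (μ+1/2) (k-r) / (((k-r).factorial):ℂ)) *
        (((2*r).factorial : ℂ) / (4^r * (r.factorial:ℂ)) *
          Gs r ((μ+1/2) + ((k-r:ℕ):ℂ)) (1/(x:ℂ)^2) / (1/(x:ℂ)^2-1)^r) from by ring,
    hQ]
  have hps : poch (μ+1/2) (k-r) * poch ((μ+1/2) + ((k-r:ℕ):ℂ)) r = poch (μ+1/2) k := by
    have h := poch_add (μ+1/2) (k-r) r
    rw [show (k-r)+r = k from by omega] at h
    exact h.symm
  rw [show (-(k:ℂ)-μ) - (k:ℂ) = -2*(k:ℂ) - μ from by ring, ← hps]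
  ring

theorem gegenbauer_reciprocal_inversion (k : ℕ) (μ : ℂ)
    (hμ : ∀ j : ℕ, μ + 1 / 2 ≠ -(j : ℂ)) (x : ℝ) (hx0 : x ≠ 0) (hx1 : x ≠ 1) (hx2 : x ≠ -1) :
    ((Nat.factorial (2 * k) : ℂ) / (2 ^ (2 * k) * (Nat.factorial k))) *
        gegenbauerC (2 * k) (μ + 1 / 2) x / ((1 - x ^ 2 : ℝ) : ℂ) ^ k =
      (∑ r ∈ Finset.range (k + 1),
        poch (-2 * (k : ℂ) - μ) (k - r) * poch (μ + 1 / 2) (k - r) /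
            (Nat.factorial (k - r)) *
          (((Nat.factorial (2 * r) : ℂ)) / (2 ^ (2 * r) * (Nat.factorial r))) *
          gegenbauerC (2 * r) (μ + (k : ℂ) - r + 1 / 2) (1 / x) /
          ((1 / x ^ 2 - 1 : ℝ) : ℂ) ^ r) ∧
    ((Nat.factorial (2 * k) : ℂ) / (2 ^ (2 * k) * (Nat.factorial k))) *
        gegenbauerC (2 * k) (μ + 1 / 2) (1 / x) / ((1 - 1 / x ^ 2 : ℝ) : ℂ) ^ k =
      ∑ r ∈ Finset.range (k + 1),
        poch (-2 * (k : ℂ) - μ) (k - r) * poch (μ + 1 / 2) (k - r) /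
            (Nat.factorial (k - r)) *
          (((Nat.factorial (2 * r) : ℂ)) / (2 ^ (2 * r) * (Nat.factorial r))) *
          gegenbauerC (2 * r) (μ + (k : ℂ) - r + 1 / 2) x /
          ((x ^ 2 - 1 : ℝ) : ℂ) ^ r := by
  constructor
  · exact main k μ hμ x hx0 hx1 hx2
  · have h0 : (1/x : ℝ) ≠ 0 := one_div_ne_zero hx0
    have h1 : (1/x : ℝ) ≠ 1 := by
      intro h
      apply hx1
      field_simp at h
      linarith
    have h2 : (1/x : ℝ) ≠ -1 := by
      intro h
      apply hx2
      field_simp at h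
      linarith
    have H := main k μ hμ (1/x) h0 h1 h2
    rw [one_div_one_div] at H
    have e1 : (1 - (1/x)^2 : ℝ) = (1 - 1/x^2 : ℝ) := by
      field_simp
    have e2 : (1/(1/x)^2 - 1 : ℝ) = (x^2 - 1 : ℝ) := by
      field_simp
    rw [e1, e2] at H
    exact H
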